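/- arXiv:2211.16698 — 2 statements merged into one kernel-verified Lean document; each statement's English description precedes it below -/
import Mathlib

section
/- Let e ≥ 2, I a cyclic group of order e, γ : I → μ_e ⊂ ℂ× an isomorphism, and ψ a rational-valued character of I. Then Σ_{d ∣ e, d ≠ e} φ(e/d) ⟨ψ, γ^d⟩_I = ψ(id) − ⟨ψ, triv⟩_I; i.e., the fine Artin conductor of a tamely ramified homomorphism with respect to a character defined over ℚ equals the Artin conductor. -/
open Polynomial Finset Representation Module CategoryTheory.MonoidalCategory

/-- The one-dimensional representation attached to a `ℂˣ`-valued character. -/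
noncomputable def lineRep {I : Type} [CommGroup I] (χ : I →* ℂˣ) : Representation ℂ I ℂ :=
  ((Algebra.lmul ℂ ℂ).toRingHom.toMonoidHom).comp ((Units.coeHom ℂ).comp χ)

lemma lineRep_char {I : Type} [CommGroup I] (χ : I →* ℂˣ) (g : I) :
    (FDRep.of (lineRep χ)).character g = ((χ g : ℂˣ) : ℂ) := by
  have h : (lineRep χ) g = ((χ g : ℂˣ) : ℂ) • LinearMap.id := by
    ext
    simp [lineRep, Algebra.lmul]
  show LinearMap.trace ℂ ℂ ((lineRep χ) g) = ((χ g : ℂˣ) : ℂ)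
  rw [h, map_smul, LinearMap.trace_id, smul_eq_mul]
  simp

/-- If a rational polynomial kills a primitive `n`-th root of unity, it kills all of its
Galois conjugates. -/
lemma rootswap {z : ℂ} {n : ℕ} (hn : 0 < n) (hz : IsPrimitiveRoot z n) {a : ℕ}
    (ha : a.Coprime n) (P : Polynomial ℚ) (hP : Polynomial.aeval z P = 0) :
    Polynomial.aeval (z ^ a) P = 0 := by
  obtain ⟨Q, hQ⟩ := minpoly.dvd ℚ z hP
  rw [hQ, map_mul]
  have h1 : Polynomial.aeval (z ^ a) (minpoly ℚ z) = 0 := by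
    rw [← Polynomial.cyclotomic_eq_minpoly_rat hz hn, Polynomial.aeval_def,
      ← Polynomial.eval_map, Polynomial.map_cyclotomic]
    exact (hz.pow_of_coprime a ha).isRoot_cyclotomic hn
  rw [h1, zero_mul]

/-- For `e ≥ 2`, `I` cyclic of order `e`, `γ : I → μ_e ⊂ ℂˣ` an isomorphism (an injective
homomorphism `I →* ℂˣ`) and `ψ` a rational-valued character of a complex representation of
`I`, the tame fine Artin conductor equals the Artin conductor:
`∑_{d ∣ e, d ≠ e} φ(e/d) ⟨ψ, γ^d⟩_I = ψ(1) − ⟨ψ, triv⟩_I`. -/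
theorem stmt_15 {I : Type} [CommGroup I] [Fintype I] [IsCyclic I]
    (he : 2 ≤ Fintype.card I)
    (γ : I →* ℂˣ) (hγ : Function.Injective γ)
    (V : FDRep ℂ I) (hrat : ∀ g : I, ∃ q : ℚ, V.character g = (q : ℂ)) :
    ∑ d ∈ (Fintype.card I).properDivisors,
      (Nat.totient (Fintype.card I / d) : ℂ) *
        ((Fintype.card I : ℂ)⁻¹ * ∑ g : I, V.character g * (((γ g : ℂˣ) : ℂ))⁻¹ ^ d)
      = V.character 1 - (Fintype.card I : ℂ)⁻¹ * ∑ g : I, V.character g := by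
  classical
  set e := Fintype.card I with he'
  have he0 : 0 < e := by omega
  have heC : (e : ℂ) ≠ 0 := Nat.cast_ne_zero.mpr he0.ne'
  haveI : Invertible ((Fintype.card I : ℂ)) := invertibleOfNonzero heC
  set ψ := V.character with hψ
  set M : ℕ → ℂ := fun j => (e : ℂ)⁻¹ * ∑ g : I, ψ g * (((γ g : ℂˣ) : ℂ))⁻¹ ^ j with hM
  -- each M j is a natural number (dimension of an invariant subspace)
  have hK : ∀ j : ℕ, ∃ mj : ℕ, M j = (mj : ℂ) := by
    intro j
    refine ⟨finrank ℂ (invariants (V ⊗ FDRep.of (lineRep ((γ ^ j)⁻¹))).ρ), ?_⟩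
    have h := FDRep.average_char_eq_finrank_invariants (V ⊗ FDRep.of (lineRep ((γ ^ j)⁻¹)))
    rw [← h]
    rw [hM]
    simp only [FDRep.char_tensor, Pi.mul_apply, lineRep_char, smul_eq_mul, invOf_eq_inv]
    rw [Nat.card_eq_fintype_card]
    congr 1
    refine Finset.sum_congr rfl fun g _ => ?_
    congr 1
    simp [Units.val_pow_eq_pow_val, inv_pow]
  choose m hm using hK
  -- generator and primitive root
  obtain ⟨g0, hg0⟩ := IsCyclic.exists_generator (α := I)
  have hord : orderOf g0 = e := by
    rw [orderOf_eq_card_of_forall_mem_zpowers hg0, Nat.card_eq_fintype_card]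
  have hordγ : orderOf (γ g0) = e := by rw [orderOf_injective γ hγ g0, hord]
  have hζ : IsPrimitiveRoot ((γ g0 : ℂˣ) : ℂ) e := by
    rw [IsPrimitiveRoot.coe_units_iff]
    rw [← hordγ]
    exact IsPrimitiveRoot.orderOf (γ g0)
  -- enumeration of I by powers of g0
  have hsum : ∀ F : I → ℂ, ∑ g : I, F g = ∑ t ∈ Finset.range e, F (g0 ^ t) := by
    intro F
    refine (Finset.sum_bij (fun t _ => g0 ^ t) (fun _ _ => Finset.mem_univ _) ?_ ?_
      (fun a ha => rfl)).symm
    · intro a ha b hb hab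
      exact pow_injOn_Iio_orderOf (by simpa [hord] using Finset.mem_range.mp ha)
        (by simpa [hord] using Finset.mem_range.mp hb) hab
    · intro g _
      obtain ⟨t, ht⟩ := (isOfFinOrder_of_finite g0).mem_powers_iff_mem_zpowers.mpr (hg0 g)
      refine ⟨t % e, Finset.mem_range.mpr (Nat.mod_lt _ he0), ?_⟩
      have h5 := pow_mod_orderOf g0 t
      rw [hord] at h5
      exact h5.trans ht
  -- rational values along powers of the generator
  choose q hq using fun t : ℕ => hrat (g0 ^ t)
  -- rewriting the sums via the enumeration
  have hEnum : ∀ k : ℕ, ∑ g : I, ψ g * (((γ g : ℂˣ) : ℂ))⁻¹ ^ k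
      = ∑ t ∈ Finset.range e, (q t : ℂ) * ((((γ g0 : ℂˣ) : ℂ))⁻¹ ^ k) ^ t := by
    intro k
    rw [hsum]
    refine Finset.sum_congr rfl fun t _ => ?_
    rw [hq]
    congr 1
    rw [map_pow]
    rw [Units.val_pow_eq_pow_val, ← inv_pow, ← pow_mul, ← pow_mul, mul_comm]
  -- Claim 1 : ψ 1 = ∑_{j<e} M j
  have hunit : ∀ g : I, (((γ g : ℂˣ) : ℂ))⁻¹ ^ e = 1 := by
    intro g
    rw [inv_pow, ← Units.val_pow_eq_pow_val, ← map_pow, pow_card_eq_one, map_one,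
      Units.val_one, inv_one]
  have hS : ∀ g : I, ∑ j ∈ Finset.range e, (((γ g : ℂˣ) : ℂ))⁻¹ ^ j
      = if g = 1 then (e : ℂ) else 0 := by
    intro g
    by_cases hg : g = 1
    · subst hg
      simp [Finset.sum_const]
    · rw [if_neg hg]
      have hw : (((γ g : ℂˣ) : ℂ))⁻¹ ≠ 1 := by
        intro hcon
        apply hg
        apply hγ
        rw [map_one]
        ext
        rw [inv_eq_one] at hcon
        simpa using hcon
      rw [geom_sum_eq hw, hunit, sub_self, zero_div]
  have hclaim1 : ψ 1 = ∑ j ∈ Finset.range e, M j := by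
    have h1 : ∑ j ∈ Finset.range e, M j
        = (e : ℂ)⁻¹ * ∑ j ∈ Finset.range e, ∑ g : I, ψ g * (((γ g : ℂˣ) : ℂ))⁻¹ ^ j := by
      rw [hM, Finset.mul_sum]
    rw [h1, Finset.sum_comm]
    have h2 : ∀ g : I, ∑ j ∈ Finset.range e, ψ g * (((γ g : ℂˣ) : ℂ))⁻¹ ^ j
        = if g = 1 then ψ g * e else 0 := by
      intro g
      rw [← Finset.mul_sum, hS]
      by_cases hg : g = 1 <;> simp [hg]
    rw [Finset.sum_congr rfl fun g _ => h2 g, Finset.sum_ite_eq' Finset.univ (1 : I)]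
    simp only [Finset.mem_univ, if_true]
    field_simp
  -- Claim 2 : M (d * a) = M d for a coprime to e / d
  have hclaim2 : ∀ d a : ℕ, d ∣ e → d ≠ e → a.Coprime (e / d) → M (d * a) = M d := by
    intro d a hde hdne ha
    have hd0 : 0 < d := Nat.pos_of_dvd_of_pos hde he0
    have hee : e = d * (e / d) := (Nat.mul_div_cancel' hde).symm
    have he'0 : 0 < e / d := Nat.div_pos (Nat.le_of_dvd he0 hde) hd0
    set η : ℂ := (((γ g0 : ℂˣ) : ℂ))⁻¹ ^ d with hηdef
    have hη : IsPrimitiveRoot η (e / d) := (hζ.inv).pow he0 hee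
    set P : Polynomial ℚ :=
      (∑ t ∈ Finset.range e, Polynomial.C (q t) * Polynomial.X ^ t)
        - Polynomial.C ((e : ℚ) * (m d : ℚ)) with hP
    have hsum_d : ∑ t ∈ Finset.range e, (q t : ℂ) * η ^ t = (e : ℂ) * (m d : ℂ) := by
      rw [← hEnum d]
      have h2 := hm d
      simp only [hM] at h2
      have h3 : (e : ℂ) * ((e : ℂ)⁻¹ * ∑ g : I, ψ g * (((γ g : ℂˣ) : ℂ))⁻¹ ^ d)
          = (e : ℂ) * (m d : ℂ) := by rw [h2]
      rwa [← mul_assoc, mul_inv_cancel₀ heC, one_mul] at h3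
    have haev : Polynomial.aeval η P = 0 := by
      rw [hP, map_sub, sub_eq_zero, map_sum]
      simp only [map_mul, Polynomial.aeval_C, Polynomial.aeval_X_pow, eq_ratCast]
      push_cast
      exact hsum_d
    have haev2 := rootswap he'0 hη ha P haev
    rw [hP, map_sub, sub_eq_zero, map_sum] at haev2
    simp only [map_mul, Polynomial.aeval_C, Polynomial.aeval_X_pow, eq_ratCast] at haev2
    push_cast at haev2
    have hfin : ∑ t ∈ Finset.range e, (q t : ℂ) * (η ^ a) ^ t = (e : ℂ) * (m d : ℂ) := haev2
    have hMd : M (d * a) = (e : ℂ)⁻¹ * ((e : ℂ) * (m d : ℂ)) := by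
      simp only [hM]
      rw [hEnum (d * a), ← hfin]
      congr 1
      refine Finset.sum_congr rfl fun t _ => ?_
      congr 1
      rw [hηdef, ← pow_mul, ← pow_mul, ← pow_mul, mul_assoc]
    rw [hMd, hm d]
    field_simp
  -- Assembly
  have hMj : ∀ j ∈ (Finset.range e).erase 0, M j = M (Nat.gcd e j) := by
    intro j hj
    obtain ⟨hj0, hje⟩ := Finset.mem_erase.mp hj
    have hje' := Finset.mem_range.mp hje
    have hj0' : 0 < j := Nat.pos_of_ne_zero hj0
    set d := Nat.gcd e j with hd
    have hd0 : 0 < d := Nat.gcd_pos_of_pos_left j he0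
    have hdvdj : d ∣ j := Nat.gcd_dvd_right e j
    have hdvde : d ∣ e := Nat.gcd_dvd_left e j
    have hdne : d ≠ e := by
      intro hcon
      have : d ≤ j := Nat.le_of_dvd hj0' hdvdj
      omega
    have hco : (j / d).Coprime (e / d) := by
      have := Nat.coprime_div_gcd_div_gcd (m := e) (n := j) hd0
      exact this.symm
    have : M (d * (j / d)) = M d := hclaim2 d (j / d) hdvde hdne hco
    rwa [Nat.mul_div_cancel' hdvdj] at this
  have hmap : ∀ j ∈ (Finset.range e).erase 0, Nat.gcd e j ∈ e.properDivisors := by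
    intro j hj
    obtain ⟨hj0, hje⟩ := Finset.mem_erase.mp hj
    have hje' := Finset.mem_range.mp hje
    have hj0' : 0 < j := Nat.pos_of_ne_zero hj0
    rw [Nat.mem_properDivisors]
    refine ⟨Nat.gcd_dvd_left e j, ?_⟩
    have : Nat.gcd e j ≤ j := Nat.le_of_dvd hj0' (Nat.gcd_dvd_right e j)
    omega
  have hfiber : ∀ d ∈ e.properDivisors,
      ∑ j ∈ (Finset.range e).erase 0 with Nat.gcd e j = d, M j
        = (Nat.totient (e / d) : ℂ) * M d := by
    intro d hd
    obtain ⟨hdvd, hdlt⟩ := Nat.mem_properDivisors.mp hd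
    have hfe : ((Finset.range e).erase 0).filter (fun j => Nat.gcd e j = d)
        = (Finset.range e).filter (fun j => Nat.gcd e j = d) := by
      ext j
      simp only [Finset.mem_filter, Finset.mem_erase, Finset.mem_range]
      constructor
      · rintro ⟨⟨_, h2⟩, h3⟩; exact ⟨h2, h3⟩
      · rintro ⟨h2, h3⟩
        refine ⟨⟨?_, h2⟩, h3⟩
        rintro rfl
        rw [Nat.gcd_zero_right] at h3
        omega
    have hcongr : ∀ j ∈ ((Finset.range e).erase 0).filter (fun j => Nat.gcd e j = d),
        M j = M d := by
      intro j hj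
      obtain ⟨hj1, hj2⟩ := Finset.mem_filter.mp hj
      rw [hMj j hj1, hj2]
    rw [Finset.sum_congr rfl hcongr, Finset.sum_const, hfe]
    rw [← Nat.totient_div_of_dvd hdvd]
    rw [nsmul_eq_mul]
  have key : ψ 1 - M 0 = ∑ d ∈ e.properDivisors, (Nat.totient (e / d) : ℂ) * M d := by
    rw [hclaim1]
    have h0 : ∑ j ∈ Finset.range e, M j = M 0 + ∑ j ∈ (Finset.range e).erase 0, M j := by
      rw [← Finset.add_sum_erase _ _ (Finset.mem_range.mpr he0)]
    rw [h0]
    rw [← Finset.sum_fiberwise_of_maps_to hmap M]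
    rw [Finset.sum_congr rfl hfiber]
    ring
  have hM0 : (e : ℂ)⁻¹ * ∑ g : I, ψ g = M 0 := by
    rw [hM]
    simp
  rw [hM0, ← key]
end

section
/- Functoriality of tame fine conductors under quotients: let φ̃ : I₁ → I₂ be a surjection of cyclic groups of orders e₁ and e₂ (so e₂ ∣ e₁), with compatible isomorphisms γᵢ : Iᵢ → μ_{eᵢ} satisfying γ₂(φ̃(g)) = γ₁(g)^{e₁/e₂}. Then for any character ψ of I₂: Σ_{d ∣ e₁, d ≠ e₁} φ(e₁/d) ⟨ψ∘φ̃, γ₁^d⟩_{I₁} = Σ_{d' ∣ e₂, d' ≠ e₂} φ(e₂/d') ⟨ψ, γ₂^{d'}⟩_{I₂}. -/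
open Finset


/-- Functoriality of tame fine conductors under quotients: let `φ̃ : I₁ → I₂` be a surjection
of cyclic groups of orders `e₁`, `e₂`, with compatible isomorphisms `γᵢ : Iᵢ → μ_{eᵢ} ⊂ ℂˣ`
satisfying `γ₂(φ̃ g) = γ₁(g)^{e₁/e₂}`. Then for any character `ψ` of a complex representation
of `I₂`:
`∑_{d ∣ e₁, d ≠ e₁} φ(e₁/d) ⟨ψ∘φ̃, γ₁^d⟩_{I₁} = ∑_{d' ∣ e₂, d' ≠ e₂} φ(e₂/d') ⟨ψ, γ₂^{d'}⟩_{I₂}`. -/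
theorem stmt_18 {I₁ I₂ : Type} [CommGroup I₁] [Fintype I₁] [IsCyclic I₁]
    [CommGroup I₂] [Fintype I₂] [IsCyclic I₂]
    (φt : I₁ →* I₂) (hφ : Function.Surjective φt)
    (γ₁ : I₁ →* ℂˣ) (h₁ : Function.Injective γ₁)
    (γ₂ : I₂ →* ℂˣ) (h₂ : Function.Injective γ₂)
    (hcomp : ∀ g : I₁, γ₂ (φt g) = γ₁ g ^ (Fintype.card I₁ / Fintype.card I₂))
    (V : FDRep ℂ I₂) :
    ∑ d ∈ (Fintype.card I₁).properDivisors,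
      (Nat.totient (Fintype.card I₁ / d) : ℂ) *
        ((Fintype.card I₁ : ℂ)⁻¹ *
          ∑ g : I₁, V.character (φt g) * (((γ₁ g : ℂˣ) : ℂ))⁻¹ ^ d)
    = ∑ d ∈ (Fintype.card I₂).properDivisors,
        (Nat.totient (Fintype.card I₂ / d) : ℂ) *
          ((Fintype.card I₂ : ℂ)⁻¹ *
            ∑ g : I₂, V.character g * (((γ₂ g : ℂˣ) : ℂ))⁻¹ ^ d) := by
  letI : DecidableEq I₁ := Classical.decEq _
  letI : DecidableEq I₂ := Classical.decEq _
  set e₁ := Fintype.card I₁ with he₁def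
  set e₂ := Fintype.card I₂ with he₂def
  set m := e₁ / e₂ with hmdef
  have he₂pos : 0 < e₂ := Fintype.card_pos
  -- all fibers of φt have the same cardinality
  have hfibc : ∀ h : I₂, (univ.filter fun g => φt g = h).card
      = (univ.filter fun g => φt g = (1 : I₂)).card := fun h =>
    MonoidHom.card_fiber_eq_of_mem_range φt (hφ h) (hφ 1)
  have hsum : e₁ = ∑ h : I₂, (univ.filter fun g => φt g = h).card :=
    Finset.card_eq_sum_card_fiberwise (fun g _ => mem_univ (φt g))
  have he₁eq : e₁ = e₂ * (univ.filter fun g : I₁ => φt g = (1 : I₂)).card := by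
    rw [hsum, Finset.sum_congr rfl fun h _ => hfibc h, Finset.sum_const, card_univ, smul_eq_mul]
  have hm : ∀ h : I₂, (univ.filter fun g => φt g = h).card = m := by
    intro h
    rw [hfibc h, hmdef, he₁eq, Nat.mul_div_cancel_left _ he₂pos]
  have he₁m : e₁ = m * e₂ := by rw [he₁eq, hm 1, Nat.mul_comm]
  have hmpos : 0 < m := by
    rw [← hm 1, Finset.card_pos]
    obtain ⟨g, hg⟩ := hφ 1
    exact ⟨g, by simpa using hg⟩
  -- kernel facts
  set K := MonoidHom.ker φt with hKdef
  have hcardK : Fintype.card K = m := by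
    rw [Fintype.card_subtype, ← hm 1]
    congr 1
    apply Finset.filter_congr
    intro x _
    simp [hKdef, MonoidHom.mem_ker]
  -- sum over kernel vanishes when m ∤ d
  have hker0 : ∀ d : ℕ, ¬ m ∣ d →
      ∑ k : K, (((γ₁ (k : I₁) : ℂˣ) : ℂ))⁻¹ ^ d = 0 := by
    intro d hd
    set χ : K →* ℂˣ := (γ₁.comp K.subtype)⁻¹ ^ d with hχdef
    set f : K →* ℂ := (Units.coeHom ℂ).comp χ with hfdef
    have hfval : ∀ k : K, f k = (((γ₁ (k : I₁) : ℂˣ) : ℂ))⁻¹ ^ d := by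
      intro k
      simp [hfdef, hχdef]
    have hfne : f ≠ 1 := by
      intro hf
      obtain ⟨k₀, hk₀⟩ := IsCyclic.exists_generator (α := K)
      have hordk : orderOf k₀ = m := by
        rw [← hcardK, ← Nat.card_eq_fintype_card]
        exact orderOf_eq_card_of_forall_mem_zpowers hk₀
      have hordγ : orderOf (γ₁ (k₀ : I₁)) = m := by
        have ho : orderOf ((k₀ : I₁)) = orderOf k₀ :=
          orderOf_injective K.subtype K.subtype_injective k₀
        rw [orderOf_injective γ₁ h₁, ho, hordk]
      have h1 : (((γ₁ (k₀ : I₁) : ℂˣ) : ℂ))⁻¹ ^ d = 1 := by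
        rw [← hfval k₀, hf]; rfl
      have h2 : ((γ₁ (k₀ : I₁) : ℂˣ) : ℂ) ^ d = 1 := by
        rwa [inv_pow, inv_eq_one] at h1
      have h3 : γ₁ (k₀ : I₁) ^ d = 1 := by
        apply Units.ext
        simpa using h2
      exact hd (hordγ ▸ orderOf_dvd_of_pow_eq_one h3)
    calc ∑ k : K, (((γ₁ (k : I₁) : ℂˣ) : ℂ))⁻¹ ^ d
        = ∑ k : K, f k := Finset.sum_congr rfl fun k _ => (hfval k).symm
      _ = 0 := sum_hom_units_eq_zero f hfne
  -- whole sum vanishes when m ∤ d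
  have hzero : ∀ d : ℕ, ¬ m ∣ d →
      ∑ g : I₁, V.character (φt g) * (((γ₁ g : ℂˣ) : ℂ))⁻¹ ^ d = 0 := by
    intro d hd
    rw [← Finset.sum_fiberwise univ φt
      (fun g => V.character (φt g) * (((γ₁ g : ℂˣ) : ℂ))⁻¹ ^ d)]
    apply Finset.sum_eq_zero
    intro h _
    obtain ⟨g₀, hg₀⟩ := hφ h
    let e : K ≃ {g : I₁ // φt g = h} :=
      { toFun := fun k => ⟨g₀ * k, by
          have := k.2
          rw [MonoidHom.mem_ker] at this
          simp [this, hg₀]⟩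
        invFun := fun g => ⟨g₀⁻¹ * g, by
          rw [hKdef, MonoidHom.mem_ker]
          simp [g.2, hg₀]⟩
        left_inv := fun k => by ext; simp
        right_inv := fun g => by ext; simp }
    have hfilt : ∑ g ∈ univ.filter (fun g => φt g = h),
        V.character (φt g) * (((γ₁ g : ℂˣ) : ℂ))⁻¹ ^ d
        = ∑ g : {g : I₁ // φt g = h},
            V.character (φt (g : I₁)) * (((γ₁ (g : I₁) : ℂˣ) : ℂ))⁻¹ ^ d := by
      exact Finset.sum_subtype _ (by simp) _
    rw [hfilt, ← Fintype.sum_equiv e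
      (fun k : K => V.character (φt (g₀ * (k : I₁))) * (((γ₁ (g₀ * (k : I₁)) : ℂˣ) : ℂ))⁻¹ ^ d)
      _ (fun k => rfl)]
    have : ∀ k : K, V.character (φt (g₀ * (k : I₁))) * (((γ₁ (g₀ * (k : I₁)) : ℂˣ) : ℂ))⁻¹ ^ d
        = (V.character h * (((γ₁ g₀ : ℂˣ) : ℂ))⁻¹ ^ d) * (((γ₁ (k : I₁) : ℂˣ) : ℂ))⁻¹ ^ d := by
      intro k
      have hk : φt (k : I₁) = 1 := by
        have := k.2
        rwa [MonoidHom.mem_ker] at this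
      rw [map_mul, hk, mul_one, hg₀, map_mul, Units.val_mul, mul_inv, mul_pow, mul_assoc]
    rw [Finset.sum_congr rfl fun k _ => this k, ← Finset.mul_sum, hker0 d hd, mul_zero]
  -- main identity when m ∣ d
  have hdvd : ∀ d' : ℕ,
      ∑ g : I₁, V.character (φt g) * (((γ₁ g : ℂˣ) : ℂ))⁻¹ ^ (m * d')
      = (m : ℂ) * ∑ h : I₂, V.character h * (((γ₂ h : ℂˣ) : ℂ))⁻¹ ^ d' := by
    intro d'
    have hstep : ∀ g : I₁, (((γ₁ g : ℂˣ) : ℂ))⁻¹ ^ (m * d')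
        = (((γ₂ (φt g) : ℂˣ) : ℂ))⁻¹ ^ d' := by
      intro g
      rw [hcomp g, Units.val_pow_eq_pow_val, ← inv_pow, ← pow_mul, inv_pow]
    calc ∑ g : I₁, V.character (φt g) * (((γ₁ g : ℂˣ) : ℂ))⁻¹ ^ (m * d')
        = ∑ g : I₁, V.character (φt g) * (((γ₂ (φt g) : ℂˣ) : ℂ))⁻¹ ^ d' :=
          Finset.sum_congr rfl fun g _ => by rw [hstep g]
      _ = ∑ h : I₂, ∑ g ∈ univ.filter (fun g => φt g = h),
            V.character h * (((γ₂ h : ℂˣ) : ℂ))⁻¹ ^ d' :=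
          (Finset.sum_fiberwise' univ φt
            (fun h => V.character h * (((γ₂ h : ℂˣ) : ℂ))⁻¹ ^ d')).symm
      _ = ∑ h : I₂, (m : ℂ) * (V.character h * (((γ₂ h : ℂˣ) : ℂ))⁻¹ ^ d') := by
          refine Finset.sum_congr rfl fun h _ => ?_
          rw [Finset.sum_const, hm h, nsmul_eq_mul]
      _ = (m : ℂ) * ∑ h : I₂, V.character h * (((γ₂ h : ℂˣ) : ℂ))⁻¹ ^ d' := by
          rw [Finset.mul_sum]
  -- restrict the LHS sum to multiples of m
  rw [← Finset.sum_filter_of_ne (p := fun d => m ∣ d) (fun d _ hne => by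
    by_contra hd
    exact hne (by rw [hzero d hd, mul_zero, mul_zero]))]
  refine Finset.sum_nbij' (fun d => d / m) (fun d' => m * d') ?_ ?_ ?_ ?_ ?_
  · intro d hdmem
    rw [Finset.mem_filter, Nat.mem_properDivisors] at hdmem
    obtain ⟨⟨hdvd₁, hlt⟩, hmd⟩ := hdmem
    obtain ⟨d', rfl⟩ := hmd
    simp only [Nat.mul_div_cancel_left _ hmpos, Nat.mem_properDivisors]
    constructor
    · rw [he₁m] at hdvd₁
      exact (mul_dvd_mul_iff_left hmpos.ne').mp hdvd₁
    · rw [he₁m] at hlt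
      exact Nat.lt_of_mul_lt_mul_left hlt
  · intro d' hd'mem
    rw [Nat.mem_properDivisors] at hd'mem
    rw [Finset.mem_filter, Nat.mem_properDivisors]
    exact ⟨⟨by rw [he₁m]; exact mul_dvd_mul_left m hd'mem.1,
      by rw [he₁m]; exact (Nat.mul_lt_mul_left hmpos).mpr hd'mem.2⟩, Dvd.intro d' rfl⟩
  · intro d hdmem
    rw [Finset.mem_filter] at hdmem
    exact Nat.mul_div_cancel' hdmem.2
  · intro d' _
    exact Nat.mul_div_cancel_left _ hmpos
  · intro d hdmem
    rw [Finset.mem_filter] at hdmem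
    obtain ⟨_, hmd⟩ := hdmem
    obtain ⟨d', rfl⟩ := hmd
    simp only [Nat.mul_div_cancel_left _ hmpos]
    rw [hdvd d']
    have h1 : e₁ / (m * d') = e₂ / d' := by
      rw [he₁m, Nat.mul_div_mul_left _ _ hmpos]
    rw [h1]
    have hm0 : (m : ℂ) ≠ 0 := Nat.cast_ne_zero.mpr hmpos.ne'
    have he₂0 : (e₂ : ℂ) ≠ 0 := Nat.cast_ne_zero.mpr he₂pos.ne'
    have h2 : (e₁ : ℂ)⁻¹ * ((m : ℂ) * ∑ h : I₂, V.character h * (((γ₂ h : ℂˣ) : ℂ))⁻¹ ^ d')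
        = (e₂ : ℂ)⁻¹ * ∑ h : I₂, V.character h * (((γ₂ h : ℂˣ) : ℂ))⁻¹ ^ d' := by
      rw [he₁m]
      push_cast
      rw [mul_inv]
      field_simp
    rw [h2]
end
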